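/- arXiv:0807.2011 — 3 statements merged into one kernel-verified Lean document; each statement's English description precedes it below -/
import Mathlib

section
/- Separation property: Let S and T be two states of a symmetric singleton congestion game with only pure altruists and egoists, both satisfying the Nash equilibrium inequalities with the same four bounds D0max, D0min+, D1max, D1min+ (i.e., every egoist-occupied resource e has d_e(n_e) ≤ D0max, every resource e has d_e(n_e+1) ≥ D0min+, and analogously with d' for altruists, with D0max ≤ D0min+ and D1max ≤ D1min+). Let E' ⊆ E and suppose S and T place the same numbers of egoists and altruists on E' in total. Then the state that agrees with T on E' and with S on E \ E' is also a pure Nash equilibrium. -/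
open Finset

/-- Congestion in a singleton game. -/
def scong {N E : Type*} [Fintype N] [DecidableEq E] (S : N → E) (e : E) : ℕ :=
  (Finset.univ.filter (fun i => S i = e)).card

/-- Number of egoists on resource `e`. -/
def egoCong {N E : Type*} [Fintype N] [DecidableEq E] (isAlt : N → Bool)
    (S : N → E) (e : E) : ℕ :=
  (Finset.univ.filter (fun i => isAlt i = false ∧ S i = e)).card

/-- Number of altruists on resource `e`. -/
def altCong {N E : Type*} [Fintype N] [DecidableEq E] (isAlt : N → Bool)
    (S : N → E) (e : E) : ℕ :=
  (Finset.univ.filter (fun i => isAlt i = true ∧ S i = e)).card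

noncomputable def socialCost {N E : Type*} [Fintype N] [Fintype E] [DecidableEq E]
    (d : E → ℕ → ℝ) (S : N → E) : ℝ :=
  ∑ e : E, (scong S e : ℝ) * d e (scong S e)

/-- Altruistic delay d'(k) = k·d(k) − (k−1)·d(k−1), d'(0) = 0. -/
noncomputable def altD (d : ℕ → ℝ) (k : ℕ) : ℝ :=
  (k : ℝ) * d k - ((k - 1 : ℕ) : ℝ) * d (k - 1)

/-- A state is a pure Nash equilibrium: no altruist (w.r.t. social cost) and no
egoist (w.r.t. her own delay) can strictly improve by switching resources. -/
noncomputable def isNE {N E : Type*} [Fintype N] [DecidableEq N] [Fintype E]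
    [DecidableEq E] (d : E → ℕ → ℝ) (isAlt : N → Bool) (S : N → E) : Prop :=
  ∀ i : N, ∀ f : E,
    if isAlt i then socialCost d S ≤ socialCost d (Function.update S i f)
    else d (S i) (scong S (S i)) ≤ d f (scong (Function.update S i f) f)

lemma scong_eq_split {N E : Type*} [Fintype N] [DecidableEq E] (isAlt : N → Bool)
    (U : N → E) (e : E) : scong U e = egoCong isAlt U e + altCong isAlt U e := by
  classical
  unfold scong egoCong altCong
  have := Finset.card_filter_add_card_filter_not
    (s := Finset.univ.filter (fun i => U i = e)) (p := fun i => isAlt i = true)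
  simp only [Finset.filter_filter] at this
  rw [← this, add_comm]
  congr 1
  · congr 1; ext j; simp [and_comm, Bool.not_eq_true]
  · congr 1; ext j; simp [and_comm]

lemma scong_split {N E : Type*} [Fintype N] [DecidableEq N] [DecidableEq E]
    (U : N → E) (i : N) (e : E) :
    scong U e = ((univ.erase i).filter (fun j => U j = e)).card
      + (if U i = e then 1 else 0) := by
  unfold scong
  rw [← Finset.insert_erase (Finset.mem_univ i), Finset.filter_insert]
  split
  · rw [Finset.card_insert_of_notMem (by simp)]
    simp
  · simp

lemma scong_update {N E : Type*} [Fintype N] [DecidableEq N] [DecidableEq E]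
    (U : N → E) (i : N) (f e : E) :
    scong (Function.update U i f) e = ((univ.erase i).filter (fun j => U j = e)).card
      + (if f = e then 1 else 0) := by
  rw [scong_split (Function.update U i f) i e]
  congr 1
  · congr 1
    apply Finset.filter_congr
    intro j hj
    rw [Function.update_of_ne (Finset.ne_of_mem_erase hj)]
  · rw [Function.update_self]

lemma exists_ego {N E : Type*} [Fintype N] [DecidableEq E] (isAlt : N → Bool)
    (V : N → E) (e : E) (h : 0 < egoCong isAlt V e) :
    ∃ j, isAlt j = false ∧ V j = e := by
  obtain ⟨j, hj⟩ := Finset.card_pos.mp h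
  exact ⟨j, (Finset.mem_filter.mp hj).2⟩

lemma exists_alt {N E : Type*} [Fintype N] [DecidableEq E] (isAlt : N → Bool)
    (V : N → E) (e : E) (h : 0 < altCong isAlt V e) :
    ∃ j, isAlt j = true ∧ V j = e := by
  obtain ⟨j, hj⟩ := Finset.card_pos.mp h
  exact ⟨j, (Finset.mem_filter.mp hj).2⟩

/-- separation property: if `S` and `T` both satisfy the Nash
equilibrium inequalities with the same four bounds, and place the same total
numbers of egoists and altruists on a subset `E'` of resources, then any state
agreeing (in per-type congestions) with `T` on `E'` and with `S` outside `E'`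
is a pure Nash equilibrium. -/
theorem separation_property {N E : Type*} [Fintype N] [DecidableEq N]
    [Fintype E] [DecidableEq E]
    (d : E → ℕ → ℝ) (isAlt : N → Bool)
    (D0max D0min D1max D1min : ℝ)
    (hD0 : D0max ≤ D0min) (hD1 : D1max ≤ D1min)
    (S T : N → E)
    (hS0 : ∀ i : N, isAlt i = false → d (S i) (scong S (S i)) ≤ D0max)
    (hS0' : ∀ e : E, D0min ≤ d e (scong S e + 1))
    (hS1 : ∀ i : N, isAlt i = true → altD (d (S i)) (scong S (S i)) ≤ D1max)
    (hS1' : ∀ e : E, D1min ≤ altD (d e) (scong S e + 1))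
    (hT0 : ∀ i : N, isAlt i = false → d (T i) (scong T (T i)) ≤ D0max)
    (hT0' : ∀ e : E, D0min ≤ d e (scong T e + 1))
    (hT1 : ∀ i : N, isAlt i = true → altD (d (T i)) (scong T (T i)) ≤ D1max)
    (hT1' : ∀ e : E, D1min ≤ altD (d e) (scong T e + 1))
    (E' : Finset E)
    (hcnt0 : (Finset.univ.filter (fun i => isAlt i = false ∧ S i ∈ E')).card =
             (Finset.univ.filter (fun i => isAlt i = false ∧ T i ∈ E')).card)
    (hcnt1 : (Finset.univ.filter (fun i => isAlt i = true ∧ S i ∈ E')).card =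
             (Finset.univ.filter (fun i => isAlt i = true ∧ T i ∈ E')).card)
    (U : N → E)
    (hUin : ∀ e ∈ E', egoCong isAlt U e = egoCong isAlt T e ∧
                      altCong isAlt U e = altCong isAlt T e)
    (hUout : ∀ e ∉ E', egoCong isAlt U e = egoCong isAlt S e ∧
                       altCong isAlt U e = altCong isAlt S e) :
    isNE d isAlt U := by
  have hsc : ∀ e : E, (e ∈ E' → scong U e = scong T e) ∧ (e ∉ E' → scong U e = scong S e) := by
    intro e
    constructor
    · intro he
      rw [scong_eq_split isAlt U e, scong_eq_split isAlt T e, (hUin e he).1, (hUin e he).2]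
    · intro he
      rw [scong_eq_split isAlt U e, scong_eq_split isAlt S e, (hUout e he).1, (hUout e he).2]
  -- lower bounds on delays after join
  have hR0 : ∀ e : E, D0min ≤ d e (scong U e + 1) := by
    intro e
    by_cases he : e ∈ E'
    · rw [(hsc e).1 he]; exact hT0' e
    · rw [(hsc e).2 he]; exact hS0' e
  have hR1 : ∀ e : E, D1min ≤ altD (d e) (scong U e + 1) := by
    intro e
    by_cases he : e ∈ E'
    · rw [(hsc e).1 he]; exact hT1' e
    · rw [(hsc e).2 he]; exact hS1' e
  unfold isNE
  intro i f
  cases hAlt : isAlt i with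
  | false =>
    simp only [hAlt, Bool.false_eq_true, if_false]
    -- occupied delay bound
    have hia : 0 < egoCong isAlt U (U i) := by
      apply Finset.card_pos.mpr
      exact ⟨i, Finset.mem_filter.mpr ⟨Finset.mem_univ i, hAlt, rfl⟩⟩
    have hL : d (U i) (scong U (U i)) ≤ D0max := by
      by_cases he : U i ∈ E'
      · obtain ⟨j, hj0, hj1⟩ := exists_ego isAlt T (U i)
          (by rw [← (hUin (U i) he).1]; exact hia)
        rw [(hsc (U i)).1 he, ← hj1]
        exact hT0 j hj0
      · obtain ⟨j, hj0, hj1⟩ := exists_ego isAlt S (U i)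
          (by rw [← (hUout (U i) he).1]; exact hia)
        rw [(hsc (U i)).2 he, ← hj1]
        exact hS0 j hj0
    by_cases hf : f = U i
    · rw [hf, Function.update_eq_self]
    · have hscU : scong (Function.update U i f) f = scong U f + 1 := by
        rw [scong_update, scong_split U i f, if_pos rfl, if_neg (fun h => hf h.symm)]
      rw [hscU]
      exact hL.trans (hD0.trans (hR0 f))
  | true =>
    simp only [hAlt, if_true]
    by_cases hf : f = U i
    · rw [hf, Function.update_eq_self]
    · have hia : 0 < altCong isAlt U (U i) := by
        apply Finset.card_pos.mpr
        exact ⟨i, Finset.mem_filter.mpr ⟨Finset.mem_univ i, hAlt, rfl⟩⟩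
      have hL : altD (d (U i)) (scong U (U i)) ≤ D1max := by
        by_cases he : U i ∈ E'
        · obtain ⟨j, hj0, hj1⟩ := exists_alt isAlt T (U i)
            (by rw [← (hUin (U i) he).2]; exact hia)
          rw [(hsc (U i)).1 he, ← hj1]
          exact hT1 j hj0
        · obtain ⟨j, hj0, hj1⟩ := exists_alt isAlt S (U i)
            (by rw [← (hUout (U i) he).2]; exact hia)
          rw [(hsc (U i)).2 he, ← hj1]
          exact hS1 j hj0
      set U' := Function.update U i f with hU'
      have hcf : scong U' f = scong U f + 1 := by
        rw [hU', scong_update, scong_split U i f, if_pos rfl, if_neg (fun h => hf h.symm)]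
      have hca : scong U (U i) = scong U' (U i) + 1 := by
        rw [hU', scong_update, scong_split U i (U i), if_pos rfl, if_neg hf]
      have heq : ∀ e : E, e ≠ f → e ≠ U i → scong U' e = scong U e := by
        intro e hef hea
        rw [hU', scong_update, scong_split U i e, if_neg (fun h => hef h.symm),
          if_neg (fun h => hea h.symm)]
      -- sum manipulation
      have hdiff : socialCost d U' - socialCost d U =
          ∑ e : E, ((scong U' e : ℝ) * d e (scong U' e) - (scong U e : ℝ) * d e (scong U e)) := by
        unfold socialCost
        rw [Finset.sum_sub_distrib]
      have hpair : ∑ e : E, ((scong U' e : ℝ) * d e (scong U' e) - (scong U e : ℝ) * d e (scong U e))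
          = ((scong U' f : ℝ) * d f (scong U' f) - (scong U f : ℝ) * d f (scong U f))
          + ((scong U' (U i) : ℝ) * d (U i) (scong U' (U i)) - (scong U (U i) : ℝ) * d (U i) (scong U (U i))) := by
        have h1 : (∑ e : E, ((scong U' e : ℝ) * d e (scong U' e) - (scong U e : ℝ) * d e (scong U e)))
            = ∑ e ∈ ({f, U i} : Finset E),
              ((scong U' e : ℝ) * d e (scong U' e) - (scong U e : ℝ) * d e (scong U e)) := by
          refine (Finset.sum_subset (Finset.subset_univ _) ?_).symm
          intro e _ he
          simp only [Finset.mem_insert, Finset.mem_singleton, not_or] at he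
          rw [heq e he.1 he.2]
          ring
        rw [h1, Finset.sum_pair hf]
      have hfb : D1min ≤ (scong U' f : ℝ) * d f (scong U' f) - (scong U f : ℝ) * d f (scong U f) := by
        have := hR1 f
        unfold altD at this
        rw [Nat.add_sub_cancel] at this
        rw [hcf]
        push_cast at this ⊢
        linarith
      have hab : (scong U (U i) : ℝ) * d (U i) (scong U (U i))
          - (scong U' (U i) : ℝ) * d (U i) (scong U' (U i)) ≤ D1max := by
        have h1 := hL
        unfold altD at h1
        have h2 : scong U (U i) - 1 = scong U' (U i) := by omega
        rw [h2] at h1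
        exact h1
      linarith
end

section
/- In a symmetric singleton congestion game with non-decreasing convex delay functions, every local optimum of the social cost with respect to single-agent moves is a global optimum: if a state S satisfies n_e·d_e(n_e) + n_f·d_f(n_f) ≤ (n_e−1)·d_e(n_e−1) + (n_f+1)·d_f(n_f+1) for all resources e with n_e ≥ 1 and all f, then S minimizes c(T) = Σ_e n_e(T)·d_e(n_e(T)) over all states T. -/
open Finset

/-- Marginal cost of adding one more agent to resource `e` when `j` agents use it. -/
noncomputable def Marg {E : Type*} (d : E → ℕ → ℝ) (e : E) (j : ℕ) : ℝ :=
  (j + 1 : ℝ) * d e (j + 1) - (j : ℝ) * d e j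

/-- Social cost of a congestion vector. -/
noncomputable def vcost {E : Type*} [Fintype E] (d : E → ℕ → ℝ) (t : E → ℕ) : ℝ :=
  ∑ e : E, (t e : ℝ) * d e (t e)

lemma marg_mono {E : Type*} (d : E → ℕ → ℝ)
    (hmono : ∀ e k, d e k ≤ d e (k + 1))
    (hconvex : ∀ (e : E) (k : ℕ), 1 ≤ k →
        d e k - d e (k - 1) ≤ d e (k + 1) - d e k)
    (e : E) : Monotone (Marg d e) := by
  apply monotone_nat_of_le_succ
  intro j
  have hc := hconvex e (j + 1) (by omega)
  simp only [Nat.add_sub_cancel] at hc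
  have hm := hmono e (j + 1)
  unfold Marg
  have hj : (0 : ℝ) ≤ (j : ℝ) := Nat.cast_nonneg j
  push_cast
  nlinarith [mul_le_mul_of_nonneg_left (sub_le_sub hc hm) hj]

lemma vcost_update {E : Type*} [Fintype E] [DecidableEq E] (d : E → ℕ → ℝ)
    (t : E → ℕ) (e : E) (v : ℕ) :
    vcost d (Function.update t e v) =
      vcost d t - (t e : ℝ) * d e (t e) + (v : ℝ) * d e v := by
  have key : ∀ u : E → ℕ,
      vcost d u = (u e : ℝ) * d e (u e) + ∑ x ∈ univ.erase e, (u x : ℝ) * d x (u x) := by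
    intro u
    rw [vcost, ← Finset.add_sum_erase univ _ (mem_univ e)]
  rw [key, key t]
  have herase : ∑ x ∈ univ.erase e, ((Function.update t e v x : ℝ) * d x (Function.update t e v x))
      = ∑ x ∈ univ.erase e, ((t x : ℝ) * d x (t x)) := by
    apply Finset.sum_congr rfl
    intro x hx
    rw [Function.update_of_ne (Finset.ne_of_mem_erase hx)]
  rw [herase, Function.update_self]
  ring

lemma key_global {E : Type*} [Fintype E] [DecidableEq E] (d : E → ℕ → ℝ)
    (hM : ∀ e, Monotone (Marg d e))
    (s : E → ℕ)
    (hloc : ∀ e f : E, 1 ≤ s e → Marg d e (s e - 1) ≤ Marg d f (s f)) :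
    ∀ (k : ℕ) (t : E → ℕ), (∑ e, ((s e : ℤ) - t e).natAbs) = k →
      (∑ e, t e) = (∑ e, s e) → vcost d s ≤ vcost d t := by
  intro k
  induction k using Nat.strong_induction_on with
  | _ k ih =>
    intro t hk hsum
    rcases Nat.eq_zero_or_pos k with hk0 | hkpos
    · -- all coordinates equal
      subst hk0
      have hall : ∀ x ∈ (univ : Finset E), ((s x : ℤ) - t x).natAbs = 0 :=
        (Finset.sum_eq_zero_iff).mp hk
      have heq : ∀ x : E, s x = t x := by
        intro x
        have := hall x (mem_univ x)
        omega
      have : vcost d s = vcost d t := by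
        unfold vcost
        exact Finset.sum_congr rfl (fun x _ => by rw [heq x])
      linarith
    · -- find e with s e > t e and f with t f > s f
      have hex_e : ∃ e, t e < s e := by
        by_contra h
        push_neg at h
        have : ∀ x ∈ (univ : Finset E), s x = t x := by
          have := (Finset.sum_eq_sum_iff_of_le (fun i _ => h i)).mp hsum.symm
          intro x hx; exact this x hx
        have : k = 0 := by
          rw [← hk]
          apply Finset.sum_eq_zero
          intro x hx
          have := this x (mem_univ x)
          omega
        omega
      have hex_f : ∃ f, s f < t f := by
        by_contra h
        push_neg at h
        have : ∀ x ∈ (univ : Finset E), t x = s x := by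
          have := (Finset.sum_eq_sum_iff_of_le (fun i _ => h i)).mp hsum
          intro x hx; exact this x hx
        have : k = 0 := by
          rw [← hk]
          apply Finset.sum_eq_zero
          intro x hx
          have := this x (mem_univ x)
          omega
        omega
      obtain ⟨e, he⟩ := hex_e
      obtain ⟨f, hf⟩ := hex_f
      have hef : e ≠ f := by
        intro h; subst h; omega
      obtain ⟨b, hb⟩ : ∃ b, t f = b + 1 := ⟨t f - 1, by omega⟩
      set t' : E → ℕ := Function.update (Function.update t f b) e (t e + 1) with ht'
      have ht'e : t' e = t e + 1 := by simp [ht']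
      have ht'f : t' f = b := by
        simp [ht', Function.update_of_ne hef.symm]
      have ht'x : ∀ x, x ≠ e → x ≠ f → t' x = t x := by
        intro x hxe hxf
        simp [ht', Function.update_of_ne hxe, Function.update_of_ne hxf]
      -- new distance is smaller
      have hdist : (∑ x, ((s x : ℤ) - t' x).natAbs) < k := by
        rw [← hk]
        apply Finset.sum_lt_sum
        · intro x _
          rcases eq_or_ne x e with rfl | hxe
          · rw [ht'e]; omega
          rcases eq_or_ne x f with rfl | hxf
          · rw [ht'f]; omega
          · rw [ht'x x hxe hxf]
        · exact ⟨e, mem_univ e, by rw [ht'e]; omega⟩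
      -- sums still equal
      have hsum' : (∑ x, t' x) = (∑ x, s x) := by
        rw [← hsum]
        have h1 : (∑ x, t' x) = t' e + ∑ x ∈ univ.erase e, t' x :=
          (Finset.add_sum_erase univ _ (mem_univ e)).symm
        have h2 : (∑ x, t x) = t e + ∑ x ∈ univ.erase e, t x :=
          (Finset.add_sum_erase univ _ (mem_univ e)).symm
        have hfe : f ∈ univ.erase e := Finset.mem_erase.mpr ⟨hef.symm, mem_univ f⟩
        have h3 : (∑ x ∈ univ.erase e, t' x) = t' f + ∑ x ∈ (univ.erase e).erase f, t' x :=
          (Finset.add_sum_erase _ _ hfe).symm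
        have h4 : (∑ x ∈ univ.erase e, t x) = t f + ∑ x ∈ (univ.erase e).erase f, t x :=
          (Finset.add_sum_erase _ _ hfe).symm
        have h5 : (∑ x ∈ (univ.erase e).erase f, t' x) = ∑ x ∈ (univ.erase e).erase f, t x := by
          apply Finset.sum_congr rfl
          intro x hx
          have hxf := Finset.ne_of_mem_erase hx
          have hxe := Finset.ne_of_mem_erase (Finset.mem_of_mem_erase hx)
          exact ht'x x hxe hxf
        rw [h1, h2, h3, h4, h5, ht'e, ht'f, hb]
        ring
      have hstep : vcost d t' ≤ vcost d t := by
        -- vcost t' = vcost t + Marg e (t e) - Marg f b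
        have hup : vcost d t' =
            vcost d t - (t f : ℝ) * d f (t f) + (b : ℝ) * d f b
              - (t e : ℝ) * d e (t e) + ((t e : ℝ) + 1) * d e (t e + 1) := by
          rw [ht', vcost_update, vcost_update]
          rw [Function.update_of_ne hef]
          push_cast
          ring
        have hMe : Marg d e (t e) ≤ Marg d f b := by
          have h1 : Marg d e (t e) ≤ Marg d e (s e - 1) := hM e (by omega)
          have h2 : Marg d e (s e - 1) ≤ Marg d f (s f) := hloc e f (by omega)
          have h3 : Marg d f (s f) ≤ Marg d f b := hM f (by omega)
          linarith
        unfold Marg at hMe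
        rw [hup, hb]
        push_cast
        nlinarith [hMe]
      have hih := ih _ hdist t' rfl hsum'
      linarith

/-- in a symmetric singleton congestion game with non-decreasing
convex delays, every local optimum of the social cost with respect to
single-agent moves is a global optimum. -/
theorem local_opt_is_global_opt {N E : Type*} [Fintype N] [DecidableEq N]
    [Fintype E] [DecidableEq E]
    (d : E → ℕ → ℝ)
    (hmono : ∀ e k, d e k ≤ d e (k + 1))
    (hconvex : ∀ (e : E) (k : ℕ), 1 ≤ k →
        d e k - d e (k - 1) ≤ d e (k + 1) - d e k)
    (S : N → E)
    (hlocal : ∀ e f : E, 1 ≤ scong S e →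
        (scong S e : ℝ) * d e (scong S e) + (scong S f : ℝ) * d f (scong S f) ≤
          ((scong S e : ℝ) - 1) * d e (scong S e - 1) +
            ((scong S f : ℝ) + 1) * d f (scong S f + 1)) :
    ∀ T : N → E, socialCost d S ≤ socialCost d T := by
  intro T
  have hM := marg_mono d hmono hconvex
  have hloc : ∀ e f : E, 1 ≤ scong S e →
      Marg d e (scong S e - 1) ≤ Marg d f (scong S f) := by
    intro e f he
    obtain ⟨a, ha⟩ : ∃ a, scong S e = a + 1 := ⟨scong S e - 1, by omega⟩
    have h := hlocal e f he
    rw [ha] at h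
    simp only [Nat.add_sub_cancel] at h ⊢
    rw [ha]
    simp only [Nat.add_sub_cancel]
    unfold Marg
    push_cast at h ⊢
    linarith
  have hsumS : (∑ e, scong S e) = Fintype.card N := by
    rw [Fintype.card, Finset.card_eq_sum_card_fiberwise (f := S) (t := univ)
      (fun x _ => mem_univ (S x))]
    rfl
  have hsumT : (∑ e, scong T e) = Fintype.card N := by
    rw [Fintype.card, Finset.card_eq_sum_card_fiberwise (f := T) (t := univ)
      (fun x _ => mem_univ (T x))]
    rfl
  have := key_global d hM (scong S) hloc _ (scong T) rfl (by rw [hsumS, hsumT])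
  exact this
end

section
/- In a singleton congestion game with only pure altruists and egoists, given a target congestion vector (n_e*)_{e∈E} with Σ_e n_e* = n, there is a state S realizing these congestions that is a pure Nash equilibrium after converting a set A of agents to pure altruists if and only if there is a perfect matching in the bipartite graph between agents and n_e* copies of each resource e (agent i adjacent to copies of e whenever e ∈ 𝒮_i) such that every agent matched to a resource that is not a best response for her (given congestions n_e*) belongs to A, assuming the congestion vector is socially optimal so that every resource is a best response for a pure altruist. -/
open Finset

/-- `e` is a best response for an egoist `i` under target congestions `nstar`. -/
def bestResp {N E : Type*} (strat : N → Finset E) (d : E → ℕ → ℝ)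
    (nstar : E → ℕ) (i : N) (e : E) : Prop :=
  e ∈ strat i ∧ ∀ f ∈ strat i, f ≠ e → d e (nstar e) ≤ d f (nstar f + 1)

/-- Nash equilibrium after converting the agents in `A` to pure altruists:
altruists compare social costs, egoists their own delays. -/
noncomputable def isNEwith {N E : Type*} [Fintype N] [DecidableEq N]
    [Fintype E] [DecidableEq E]
    (strat : N → Finset E) (d : E → ℕ → ℝ) (A : Finset N) (S : N → E) : Prop :=
  ∀ i : N, ∀ f ∈ strat i,
    if i ∈ A then socialCost d S ≤ socialCost d (Function.update S i f)
    else d (S i) (scong S (S i)) ≤ d f (scong (Function.update S i f) f)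

lemma scong_update_ne {N E : Type*} [Fintype N] [DecidableEq N] [DecidableEq E]
    (S : N → E) (i : N) (f : E) (h : f ≠ S i) :
    scong (Function.update S i f) f = scong S f + 1 := by
  unfold scong
  have hset : Finset.univ.filter (fun j => Function.update S i f j = f)
      = insert i (Finset.univ.filter (fun j => S j = f)) := by
    ext j
    by_cases hj : j = i <;> simp [Function.update_apply, hj]
  rw [hset, Finset.card_insert_of_notMem]
  simp [Ne.symm h]

/-- for a socially optimal target congestion vector `nstar`, there
is a state realizing `nstar` that is a pure Nash equilibrium after converting
the agents of `A` to pure altruists iff there is a perfect matching of agents to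
resource copies (i.e. a state realizing `nstar` with all strategies allowed) in
which every agent matched to a non-best-response resource belongs to `A`. -/
theorem stabilization_matching_characterization
    {N E : Type*} [Fintype N] [DecidableEq N] [Fintype E] [DecidableEq E]
    (strat : N → Finset E) (d : E → ℕ → ℝ)
    (nstar : E → ℕ) (hsum : ∑ e : E, nstar e = Fintype.card N)
    -- social optimality of the congestion vector `nstar`
    (hopt : ∀ T : N → E, (∀ i, T i ∈ strat i) →
        (∑ e : E, (nstar e : ℝ) * d e (nstar e)) ≤ socialCost d T)
    (A : Finset N) :
    (∃ S : N → E, (∀ i, S i ∈ strat i) ∧ (∀ e, scong S e = nstar e) ∧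
        isNEwith strat d A S) ↔
    (∃ S : N → E, (∀ i, S i ∈ strat i) ∧ (∀ e, scong S e = nstar e) ∧
        ∀ i : N, ¬ bestResp strat d nstar i (S i) → i ∈ A) := by
  constructor
  · rintro ⟨S, hS, hcong, hNE⟩
    refine ⟨S, hS, hcong, fun i hbr => ?_⟩
    by_contra hiA
    apply hbr
    refine ⟨hS i, fun f hf hne => ?_⟩
    have := hNE i f hf
    rw [if_neg hiA] at this
    rw [hcong (S i), scong_update_ne S i f hne, hcong f] at this
    exact this
  · rintro ⟨S, hS, hcong, hA⟩
    refine ⟨S, hS, hcong, fun i f hf => ?_⟩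
    by_cases hiA : i ∈ A
    · rw [if_pos hiA]
      have h1 : socialCost d S = ∑ e : E, (nstar e : ℝ) * d e (nstar e) := by
        unfold socialCost; simp only [hcong]
      rw [h1]
      apply hopt
      intro j
      by_cases hj : j = i
      · subst hj; simp [hf]
      · simp [Function.update_apply, hj, hS j]
    · rw [if_neg hiA]
      have hbr : bestResp strat d nstar i (S i) := by
        by_contra h; exact hiA (hA i h)
      by_cases hfe : f = S i
      · subst hfe; rw [Function.update_eq_self]
      · rw [hcong (S i), scong_update_ne S i f hfe, hcong f]
        exact hbr.2 f hf hfe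
end
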